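/- arXiv:1312.0277 — 2 statements merged into one kernel-verified Lean document; each statement's English description precedes it below -/
import Mathlib

section
/- Let μ be a measure, 1 ≤ p < ∞, σ > 1, C_S > 0, and suppose (B_j)_{j≥1} is a decreasing sequence of measurable sets contained in a set B* with 0 < μ(B*) < ∞, satisfying (μ(B_{j+1})/μ(B*))^{1/(pσ)} ≤ C_S·2^{j+4}·(μ(B_j)/μ(B*))^{1/p} for all j ≥ 1. If additionally there exist constants 0 < a ≤ μ(B_j) for all j, then μ(B*) ≤ C_S^{pσ/(σ-1)} · K₁(σ,p) · μ(B_1), where K₁(σ,p) := exp(σp·(∑_{j=1}^∞ (j+4)/σ^j)·log 2). -/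
/-!
Taking logarithms, `u j = log (μ (B (j + 1)) / μ B*)` satisfies the linear recurrence inequality
`u (j + 1) ≤ d j + σ * u j` with `d j = p σ (log C_S + (j + 5) log 2)`, so
`u n / σ ^ n ≤ u 0 + ∑ j < n, d j / σ ^ (j + 1)`. Since `u` is bounded below by `log (a / μ B*)`,
the left side tends to `0`, whence `-u 0 ≤ ∑' j, d j / σ ^ (j + 1)`; the exponential of this series
is exactly `C_S ^ (p σ / (σ - 1)) K₁(σ, p)`.
-/

open MeasureTheory Real Filter Finset Topology

section LinearRecurrence

variable {u d : ℕ → ℝ} {σ : ℝ}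

theorem le_pow_mul_add_sum_of_le_add_mul (hσ : 0 < σ) (h : ∀ j, u (j + 1) ≤ d j + σ * u j)
    (n : ℕ) : u n ≤ σ ^ n * (u 0 + ∑ j ∈ range n, d j / σ ^ (j + 1)) := by
  induction n with
  | zero => simp
  | succ n ih =>
    calc u (n + 1) ≤ d n + σ * u n := h n
      _ ≤ d n + σ * (σ ^ n * (u 0 + ∑ j ∈ range n, d j / σ ^ (j + 1))) := by gcongr
      _ = σ ^ (n + 1) * (u 0 + ∑ j ∈ range (n + 1), d j / σ ^ (j + 1)) := by
        rw [sum_range_succ]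
        field_simp
        ring

theorem add_tsum_nonneg_of_le_add_mul (hσ : 1 < σ) (h : ∀ j, u (j + 1) ≤ d j + σ * u j)
    {L : ℝ} (hL : ∀ n, L ≤ u n) (hd : Summable fun j ↦ d j / σ ^ (j + 1)) :
    0 ≤ u 0 + ∑' j, d j / σ ^ (j + 1) := by
  have hσ0 : 0 < σ := one_pos.trans hσ
  have hlow (n : ℕ) : L / σ ^ n ≤ u 0 + ∑ j ∈ range n, d j / σ ^ (j + 1) := by
    rw [div_le_iff₀' (pow_pos hσ0 n)]
    exact (hL n).trans (le_pow_mul_add_sum_of_le_add_mul hσ0 h n)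
  have hL0 : Tendsto (fun n ↦ L / σ ^ n) atTop (𝓝 0) :=
    tendsto_const_nhds.div_atTop (tendsto_pow_atTop_atTop_of_one_lt hσ)
  exact le_of_tendsto_of_tendsto' hL0 (hd.hasSum.tendsto_sum_nat.const_add _) hlow

end LinearRecurrence

section Series

variable {σ : ℝ}

theorem hasSum_one_div_pow_succ (hσ : 1 < σ) :
    HasSum (fun j : ℕ ↦ 1 / σ ^ (j + 1)) (1 / (σ - 1)) := by
  have hσ0 : 0 < σ := one_pos.trans hσ
  have h := (hasSum_geometric_of_lt_one (inv_nonneg.2 hσ0.le)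
    (inv_lt_one_of_one_lt₀ hσ)).mul_left σ⁻¹
  rw [show σ⁻¹ * (1 - σ⁻¹)⁻¹ = 1 / (σ - 1) by field_simp] at h
  exact h.congr_fun fun j ↦ by rw [pow_succ, inv_pow, one_div, mul_inv, mul_comm]

theorem summable_add_div_pow_succ (hσ : 1 < σ) (c : ℝ) :
    Summable fun j : ℕ ↦ ((j : ℝ) + 1 + c) / σ ^ (j + 1) := by
  have hσ0 : 0 < σ := one_pos.trans hσ
  have hr : ‖σ⁻¹‖ < 1 := by
    rw [norm_inv, Real.norm_of_nonneg hσ0.le]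
    exact inv_lt_one_of_one_lt₀ hσ
  have hgeom : Summable fun j : ℕ ↦ σ⁻¹ ^ j := summable_geometric_of_norm_lt_one hr
  refine (((summable_pow_mul_geometric_of_norm_lt_one 1 hr).add
    (hgeom.mul_left (1 + c))).mul_left σ⁻¹).congr fun j ↦ ?_
  rw [pow_one, inv_pow, pow_succ]
  field_simp
  ring

end Series

theorem log_le_of_rpow_le_mul_rpow {x y c p σ : ℝ} (hx : 0 < x) (hy : 0 < y) (hc : 0 < c)
    (hp : 0 < p) (hσ : 0 < σ) (h : x ^ (1 / (p * σ)) ≤ c * y ^ (1 / p)) :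
    log x ≤ p * σ * log c + σ * log y := by
  have hlog := log_le_log (rpow_pos_of_pos hx _) h
  rw [log_rpow hx, log_mul hc.ne' (rpow_pos_of_pos hy _).ne', log_rpow hy] at hlog
  have := mul_le_mul_of_nonneg_left hlog (mul_pos hp hσ).le
  field_simp at this
  linarith

theorem stmt11_general {X : Type*} [MeasurableSpace X] (μ : Measure X)
    (p σ C_S a : ℝ) (hp : 1 ≤ p) (hσ : 1 < σ) (hC : 0 < C_S) (ha : 0 < a)
    (Bstar : Set X) (B : ℕ → Set X)
    (hpos : 0 < μ Bstar) (hfin : μ Bstar < ⊤)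
    (hlb : ∀ j, 1 ≤ j → a ≤ (μ (B j)).toReal)
    (hiter : ∀ j : ℕ, 1 ≤ j →
      ((μ (B (j + 1))).toReal / (μ Bstar).toReal) ^ (1 / (p * σ)) ≤
        C_S * 2 ^ (j + 4) * ((μ (B j)).toReal / (μ Bstar).toReal) ^ (1 / p)) :
    (μ Bstar).toReal ≤ C_S ^ (p * σ / (σ - 1)) *
      Real.exp (σ * p * (∑' j : ℕ, ((j : ℝ) + 1 + 4) / σ ^ (j + 1)) * Real.log 2) *
      (μ (B 1)).toReal := by
  have hp0 : 0 < p := by linarith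
  have hσ0 : 0 < σ := by linarith
  set M := (μ Bstar).toReal
  set S := ∑' j : ℕ, ((j : ℝ) + 1 + 4) / σ ^ (j + 1)
  have hM : 0 < M := ENNReal.toReal_pos hpos.ne' hfin.ne
  have hb1 : 0 < (μ (B 1)).toReal := ha.trans_le (hlb 1 le_rfl)
  have hm (j : ℕ) : 0 < (μ (B (j + 1))).toReal / M := div_pos (ha.trans_le (hlb _ le_add_self)) hM
  set u : ℕ → ℝ := fun j ↦ log ((μ (B (j + 1))).toReal / M)
  set d : ℕ → ℝ := fun j ↦ p * σ * log C_S + p * σ * log 2 * ((j : ℝ) + 1 + 4)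
  have hrec (j : ℕ) : u (j + 1) ≤ d j + σ * u j := by
    have := log_le_of_rpow_le_mul_rpow (hm (j + 1)) (hm j) (by positivity) hp0 hσ0
      (hiter (j + 1) le_add_self)
    rw [log_mul hC.ne' (by positivity), log_pow] at this
    push_cast at this
    simp only [u, d]
    linarith
  have hlow (n : ℕ) : log (a / M) ≤ u n :=
    log_le_log (div_pos ha hM) (div_le_div_of_nonneg_right (hlb _ le_add_self) hM.le)
  have hD : HasSum (fun j ↦ d j / σ ^ (j + 1))
      (p * σ * log C_S * (1 / (σ - 1)) + p * σ * log 2 * S) := by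
    refine (((hasSum_one_div_pow_succ hσ).mul_left (p * σ * log C_S)).add
      ((summable_add_div_pow_succ hσ 4).hasSum.mul_left (p * σ * log 2))).congr_fun fun j ↦ ?_
    ring
  have key := add_tsum_nonneg_of_le_add_mul hσ hrec hlow hD.summable
  rw [hD.tsum_eq] at key
  simp only [u, zero_add] at key
  rw [log_div hb1.ne' hM.ne'] at key
  calc M = exp (log M) := (exp_log hM).symm
    _ ≤ exp (p * σ * log C_S * (1 / (σ - 1)) + p * σ * log 2 * S + log (μ (B 1)).toReal) :=
      exp_le_exp.2 (by linarith)
    _ = _ := by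
      rw [exp_add, exp_add, exp_log hb1, rpow_def_of_pos hC]
      ring_nf

theorem stmt11 {X : Type*} [MeasurableSpace X] (μ : Measure X)
    (p σ C_S a : ℝ) (hp : 1 ≤ p) (hσ : 1 < σ) (hC : 0 < C_S) (ha : 0 < a)
    (Bstar : Set X) (B : ℕ → Set X)
    (hmeas : ∀ j, MeasurableSet (B j)) (hBstarm : MeasurableSet Bstar)
    (hdec : ∀ j, B (j + 1) ⊆ B j) (hsub : ∀ j, B j ⊆ Bstar)
    (hpos : 0 < μ Bstar) (hfin : μ Bstar < ⊤)
    (hlb : ∀ j, 1 ≤ j → a ≤ (μ (B j)).toReal)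
    (hiter : ∀ j : ℕ, 1 ≤ j →
      ((μ (B (j + 1))).toReal / (μ Bstar).toReal) ^ (1 / (p * σ)) ≤
        C_S * 2 ^ (j + 4) * ((μ (B j)).toReal / (μ Bstar).toReal) ^ (1 / p)) :
    (μ Bstar).toReal ≤ C_S ^ (p * σ / (σ - 1)) *
      Real.exp (σ * p * (∑' j : ℕ, ((j : ℝ) + 1 + 4) / σ ^ (j + 1)) * Real.log 2) *
      (μ (B 1)).toReal :=
  stmt11_general μ p σ C_S a hp hσ hC ha Bstar B hpos hfin hlb hiter
end

section
/- Let μ be a Borel measure on (ℝⁿ, Euclidean distance) with 0 < μ(B) < ∞ for every ball B. Suppose there exist 1 ≤ p < ∞, σ > 1, and C_S > 0 such that for every ball B = B(y,R) and every compactly supported Lipschitz function φ on B, ((1/μ(B)) ∫_B |φ|^{pσ} dμ)^{1/(pσ)} ≤ C_S R ((1/μ(B)) ∫_B |∇φ|^p dμ)^{1/p} + C_S ((1/μ(B)) ∫_B |φ|^p dμ)^{1/p}. Then μ is doubling: there exists C_D depending only on p, σ, C_S such that μ(B(y,2R)) ≤ C_D μ(B(y,R)) for all y ∈ ℝⁿ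 and R > 0. -/
open MeasureTheory Metric ENNReal NNReal

open Filter Topology Module

/-!
Testing the Sobolev inequality on `ball y (2 * R)` against a Lipschitz cutoff that equals `1` on
`ball x (r / 2)` and vanishes outside `ball x r` gives a reverse Hölder recursion for the normalized
measures `a r = μ (ball x r) / μ (ball y (2 * R))`, namely
`a (r / 2) ≤ (10 C R / r) ^ (p σ) * (a r) ^ σ`. Since `σ > 1`, once `a (R / 2)` lies below a
threshold depending only on `p`, `σ`, `C`, iterating along `r_k = R / 2 ^ (k + 1)` forces the
super-exponential decay `a r_k ≲ 2 ^ (-σ ^ k)`. If `μ (ball y R)` were below that threshold times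
`μ (ball y (2 * R))`, this would hold at every `x ∈ ball y (R / 2)`, and covering `ball y (R / 2)`
by `O(2 ^ (k n))` balls of radius `r_k` would give `μ (ball y (R / 2)) ≲ 2 ^ (k n - σ ^ k) → 0`,
contradicting the positivity of `μ` on balls.
-/

section Cutoff

variable {X : Type*} [PseudoMetricSpace X] {r : ℝ}

noncomputable def ballCutoff (x : X) (r : ℝ) (z : X) : ℝ := min 1 (max 0 (3 - 4 / r * dist z x))

theorem abs_ballCutoff_le_one (x z : X) : |ballCutoff x r z| ≤ 1 :=
  abs_le.2 ⟨by unfold ballCutoff; simp only [le_min_iff, le_max_iff]; norm_num,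
    min_le_left _ _⟩

theorem ballCutoff_of_dist_le (hr : 0 < r) (x : X) {z : X} (hz : dist z x ≤ r / 2) :
    ballCutoff x r z = 1 := by
  have : 4 / r * dist z x ≤ 2 := by
    calc 4 / r * dist z x ≤ 4 / r * (r / 2) := by gcongr
      _ = 2 := by field_simp; norm_num
  unfold ballCutoff
  rw [max_eq_right (by linarith), min_eq_left (by linarith)]

theorem ballCutoff_of_le_dist (hr : 0 < r) (x : X) {z : X} (hz : 3 * r / 4 ≤ dist z x) :
    ballCutoff x r z = 0 := by
  have : 3 ≤ 4 / r * dist z x := by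
    calc (3 : ℝ) = 4 / r * (3 * r / 4) := by field_simp
      _ ≤ 4 / r * dist z x := by gcongr
  unfold ballCutoff
  rw [max_eq_left (by linarith), min_eq_right zero_le_one]

theorem tsupport_ballCutoff_subset (hr : 0 < r) (x : X) :
    tsupport (ballCutoff x r) ⊆ closedBall x (3 * r / 4) := by
  refine closure_minimal (fun z hz => ?_) isClosed_closedBall
  by_contra hzr
  exact hz (ballCutoff_of_le_dist hr x (not_le.1 hzr).le)

theorem tsupport_ballCutoff_subset_ball (hr : 0 < r) (x : X) :
    tsupport (ballCutoff x r) ⊆ ball x r :=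
  (tsupport_ballCutoff_subset hr x).trans (closedBall_subset_ball (by linarith))

theorem hasCompactSupport_ballCutoff [ProperSpace X] (hr : 0 < r) (x : X) :
    HasCompactSupport (ballCutoff x r) :=
  (isCompact_closedBall x _).of_isClosed_subset (isClosed_tsupport _)
    (tsupport_ballCutoff_subset hr x)

theorem lipschitzWith_ballCutoff (hr : 0 < r) (x : X) :
    LipschitzWith (4 / r).toNNReal (ballCutoff x r) := by
  have hlin : LipschitzWith (4 / r).toNNReal fun t : ℝ => 3 - 4 / r * t := by
    refine LipschitzWith.of_dist_le_mul fun a b => ?_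
    rw [Real.coe_toNNReal _ (by positivity), Real.dist_eq, Real.dist_eq,
      show 3 - 4 / r * a - (3 - 4 / r * b) = 4 / r * (b - a) by ring, abs_mul,
      abs_of_pos (by positivity), abs_sub_comm]
  have h := ((hlin.const_max 0).const_min 1).comp (LipschitzWith.dist_left x)
  rw [mul_one] at h
  exact h

end Cutoff

theorem setIntegral_le_mul_measureReal {α : Type*} [MeasurableSpace α] {μ : Measure α}
    {f : α → ℝ} {s t : Set α} {c : ℝ} (hμt : μ t ≠ ∞) (hc : 0 ≤ c) (hf : ∀ z, ‖f z‖ ≤ c)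
    (hft : ∀ z ∉ t, f z = 0) : ∫ z in s, f z ∂μ ≤ c * μ.real t := by
  have hst : (μ.restrict s) t ≤ μ t := Measure.restrict_apply_le _ _
  calc ∫ z in s, f z ∂μ = ∫ z in t, f z ∂(μ.restrict s) :=
        (setIntegral_eq_integral_of_forall_compl_eq_zero hft).symm
    _ ≤ c * (μ.restrict s).real t :=
        (le_abs_self _).trans <| norm_setIntegral_le_of_norm_le_const
          (hst.trans_lt hμt.lt_top) fun z _ => hf z
    _ ≤ c * μ.real t := by gcongr; exact ENNReal.toReal_mono hμt hst

section CutoffIntegrals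

variable {X : Type*} [PseudoMetricSpace X] [MeasurableSpace X] {μ : Measure X} {x : X} {r : ℝ}

theorem measureReal_ball_le_setIntegral_ballCutoff [OpensMeasurableSpace X] (hr : 0 < r)
    {s : Set X} (hμs : μ s ≠ ∞) (hs : ball x (r / 2) ⊆ s) {q : ℝ} (hq : 0 ≤ q) :
    μ.real (ball x (r / 2)) ≤ ∫ z in s, |ballCutoff x r z| ^ q ∂μ := by
  have hone : ∫ z in ball x (r / 2), |ballCutoff x r z| ^ q ∂μ = ∫ z in ball x (r / 2), 1 ∂μ :=
    setIntegral_congr_fun measurableSet_ball fun z hz => by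
      simp [ballCutoff_of_dist_le hr x (mem_ball.1 hz).le]
  rw [setIntegral_const, smul_eq_mul, mul_one] at hone
  rw [← hone]
  refine setIntegral_mono_set ?_ (ae_of_all _ fun z => by positivity) hs.eventuallyLE
  refine Measure.integrableOn_of_bounded (M := 1) hμs
    ((lipschitzWith_ballCutoff hr x).continuous.abs.rpow_const fun _ => Or.inr hq
      ).aestronglyMeasurable (ae_of_all _ fun z => ?_)
  rw [Real.norm_of_nonneg (by positivity)]
  exact Real.rpow_le_one (abs_nonneg _) (abs_ballCutoff_le_one x z) hq

theorem setIntegral_ballCutoff_le (hr : 0 < r) (hμ : μ (ball x r) ≠ ∞) (s : Set X) {q : ℝ}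
    (hq : 0 < q) : ∫ z in s, |ballCutoff x r z| ^ q ∂μ ≤ μ.real (ball x r) := by
  refine (setIntegral_le_mul_measureReal hμ zero_le_one (fun z => ?_) fun z hz => ?_).trans_eq
    (one_mul _)
  · rw [Real.norm_of_nonneg (by positivity)]
    exact Real.rpow_le_one (abs_nonneg _) (abs_ballCutoff_le_one x z) hq.le
  · rw [image_eq_zero_of_notMem_tsupport (hz <| tsupport_ballCutoff_subset_ball hr x ·), abs_zero,
      Real.zero_rpow hq.ne']

theorem setIntegral_norm_fderiv_ballCutoff_le {E : Type*} [NormedAddCommGroup E] [NormedSpace ℝ E]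
    [MeasurableSpace E] {μ : Measure E} {x : E} (hr : 0 < r) (hμ : μ (ball x r) ≠ ∞) (s : Set E)
    {p : ℝ} (hp : 0 < p) :
    ∫ z in s, ‖fderiv ℝ (ballCutoff x r) z‖ ^ p ∂μ ≤ (4 / r) ^ p * μ.real (ball x r) := by
  refine setIntegral_le_mul_measureReal hμ (by positivity) (fun z => ?_) fun z hz => ?_
  · rw [Real.norm_of_nonneg (by positivity)]
    gcongr
    simpa [Real.coe_toNNReal _ (by positivity : 0 ≤ 4 / r)] using
      norm_fderiv_le_of_lipschitz ℝ (lipschitzWith_ballCutoff hr x) (x₀ := z)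
  · rw [fderiv_of_notMem_tsupport ℝ (hz <| tsupport_ballCutoff_subset_ball hr x ·), norm_zero,
      Real.zero_rpow hp.ne']

end CutoffIntegrals

theorem le_rpow_mul_rpow_of_rpow_one_div_le {A B K p σ : ℝ} (hA : 0 ≤ A) (hB : 0 ≤ B)
    (hK : 0 ≤ K) (hp : 0 < p) (hσ : 0 < σ) (h : A ^ (1 / (p * σ)) ≤ K * B ^ (1 / p)) :
    A ≤ K ^ (p * σ) * B ^ σ := by
  have hpσ : 0 < p * σ := mul_pos hp hσ
  calc A = (A ^ (1 / (p * σ))) ^ (p * σ) := by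
        rw [← Real.rpow_mul hA, one_div_mul_cancel hpσ.ne', Real.rpow_one]
    _ ≤ (K * B ^ (1 / p)) ^ (p * σ) := by gcongr
    _ = K ^ (p * σ) * B ^ σ := by
        rw [Real.mul_rpow hK (by positivity), ← Real.rpow_mul hB, one_div,
          inv_mul_cancel_left₀ hp.ne']

theorem le_rpow_pow_of_le_rpow {b : ℕ → ℝ} {σ : ℝ} (hb : ∀ k, 0 ≤ b k) (hσ : 0 ≤ σ)
    (h : ∀ k, b (k + 1) ≤ b k ^ σ) (k : ℕ) : b k ≤ b 0 ^ σ ^ k := by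
  induction k with
  | zero => simp
  | succ k ih =>
    calc b (k + 1) ≤ b k ^ σ := h k
      _ ≤ (b 0 ^ σ ^ k) ^ σ := Real.rpow_le_rpow (hb k) ih hσ
      _ = b 0 ^ σ ^ (k + 1) := by rw [← Real.rpow_mul (hb 0), pow_succ]

-- The scale `c` for which `b k := c * (2 ^ k) ^ (s / (σ - 1)) * a k` turns the recursion
-- `a (k + 1) ≤ (K * 2 ^ k) ^ s * a k ^ σ` into `b (k + 1) ≤ b k ^ σ`.
noncomputable def iterationScale (K s σ : ℝ) : ℝ := (2 ^ (σ - 1)⁻¹ * K) ^ (s / (σ - 1))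

theorem iterationScale_pos {K : ℝ} (hK : 0 < K) (s σ : ℝ) : 0 < iterationScale K s σ := by
  unfold iterationScale; positivity

theorem le_iterationScale_inv_mul_rpow_pow {a : ℕ → ℝ} {K s σ : ℝ} (ha : ∀ k, 0 ≤ a k)
    (hK : 0 < K) (hs : 0 ≤ s) (hσ : 1 < σ) (h : ∀ k, a (k + 1) ≤ (K * 2 ^ k) ^ s * a k ^ σ)
    (k : ℕ) :
    a k ≤ (iterationScale K s σ)⁻¹ * (iterationScale K s σ * a 0) ^ σ ^ k := by
  set c := iterationScale K s σ with hc
  set t := s / (σ - 1)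
  have hc0 : 0 < c := iterationScale_pos hK s σ
  have hσ1 : σ - 1 ≠ 0 := by linarith
  have hcσ : c ^ σ = c * (2 ^ t * K ^ s) := by
    have : c ^ (σ - 1) = 2 ^ t * K ^ s := by
      rw [hc, iterationScale, ← Real.rpow_mul (by positivity), div_mul_cancel₀ s hσ1,
        Real.mul_rpow (by positivity) hK.le, ← Real.rpow_mul (by norm_num), inv_mul_eq_div]
    rw [← this, ← Real.rpow_one_add' hc0.le (by linarith)]
    ring_nf
  set b : ℕ → ℝ := fun k => c * ((2 : ℝ) ^ k) ^ t * a k with hb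
  have hb0 : ∀ k, 0 ≤ b k := fun k => by positivity [ha k]
  have hrec : ∀ k, b (k + 1) ≤ b k ^ σ := by
    intro k
    have hq : (0 : ℝ) < 2 ^ k := by positivity
    calc b (k + 1) ≤ c * ((2 : ℝ) ^ (k + 1)) ^ t * ((K * 2 ^ k) ^ s * a k ^ σ) :=
          mul_le_mul_of_nonneg_left (h k) (by positivity)
      _ = c * (2 ^ t * K ^ s) * (((2 : ℝ) ^ k) ^ t * ((2 : ℝ) ^ k) ^ s) * a k ^ σ := by
          rw [pow_succ, Real.mul_rpow hq.le (by norm_num), Real.mul_rpow hK.le hq.le]; ring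
      _ = b k ^ σ := by
          rw [← hcσ, ← Real.rpow_add hq, Real.mul_rpow (by positivity) (ha k),
            Real.mul_rpow hc0.le (by positivity), ← Real.rpow_mul hq.le]
          congr 3
          simp only [t]
          field_simp
          ring
  calc a k ≤ c⁻¹ * b k := by
        rw [hb, ← mul_assoc, ← mul_assoc, inv_mul_cancel₀ hc0.ne', one_mul]
        exact le_mul_of_one_le_left (ha k)
          (Real.one_le_rpow (one_le_pow₀ one_le_two) (by positivity))
    _ ≤ c⁻¹ * (c * a 0) ^ σ ^ k := by
        gcongr
        simpa [hb] using le_rpow_pow_of_le_rpow hb0 (by linarith) hrec k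

theorem tendsto_pow_mul_rpow_pow_atTop_nhds_zero (A : ℝ) {θ σ : ℝ} (hθ0 : 0 < θ) (hθ1 : θ < 1)
    (hσ : 1 < σ) : Tendsto (fun k : ℕ => A ^ k * θ ^ σ ^ k) atTop (𝓝 0) := by
  obtain ⟨c, hc⟩ : ∃ c : ℕ, θ ^ c < (2 * (|A| + 1))⁻¹ :=
    exists_pow_lt_of_lt_one (by positivity) hθ1
  have hAc : |A| * θ ^ c ≤ 2⁻¹ := by
    calc |A| * θ ^ c ≤ (|A| + 1) * θ ^ c := by gcongr; linarith
      _ ≤ (|A| + 1) * (2 * (|A| + 1))⁻¹ := by gcongr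
      _ = 2⁻¹ := by field_simp
  have hlin : ∀ᶠ k : ℕ in atTop, ((c * k : ℕ) : ℝ) ≤ σ ^ k := by
    filter_upwards [(isLittleO_coe_const_pow_of_one_lt (R := ℝ) hσ).bound
      (c := ((c : ℝ) + 1)⁻¹) (by positivity)] with k hk
    rw [Real.norm_natCast, Real.norm_of_nonneg (by positivity), inv_mul_eq_div,
      le_div_iff₀ (by positivity)] at hk
    push_cast
    nlinarith [(k.cast_nonneg : (0 : ℝ) ≤ k)]
  refine squeeze_zero_norm' ?_
    (tendsto_pow_atTop_nhds_zero_of_lt_one (by norm_num) (by norm_num : (2 : ℝ)⁻¹ < 1))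
  filter_upwards [hlin] with k hk
  calc ‖A ^ k * θ ^ σ ^ k‖ = |A| ^ k * θ ^ σ ^ k := by
        rw [norm_mul, norm_pow, Real.norm_eq_abs, Real.norm_of_nonneg (by positivity)]
    _ ≤ |A| ^ k * θ ^ ((c * k : ℕ) : ℝ) := by
        exact mul_le_mul_of_nonneg_left (Real.rpow_le_rpow_of_exponent_ge hθ0 hθ1.le hk)
          (by positivity)
    _ = (|A| * θ ^ c) ^ k := by rw [Real.rpow_natCast, mul_pow, pow_mul]
    _ ≤ 2⁻¹ ^ k := by gcongr

section Sobolev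

variable {E : Type*} [NormedAddCommGroup E] [NormedSpace ℝ E] [MeasurableSpace E]

def SobolevOnBalls (μ : Measure E) (p σ C : ℝ) : Prop :=
  ∀ (y : E) (R : ℝ), 0 < R → ∀ φ : E → ℝ,
    (∃ L : ℝ≥0, LipschitzWith L φ) → HasCompactSupport φ → tsupport φ ⊆ ball y R →
    ((μ (ball y R)).toReal⁻¹ * ∫ x in ball y R, |φ x| ^ (p * σ) ∂μ) ^ (1 / (p * σ)) ≤
      C * R * ((μ (ball y R)).toReal⁻¹ * ∫ x in ball y R, ‖fderiv ℝ φ x‖ ^ p ∂μ) ^ (1 / p) +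
      C * ((μ (ball y R)).toReal⁻¹ * ∫ x in ball y R, |φ x| ^ p ∂μ) ^ (1 / p)

variable [ProperSpace E] [BorelSpace E] {μ : Measure E} [IsFiniteMeasureOnCompacts μ]
  {p σ C : ℝ}

theorem SobolevOnBalls.measureReal_ball_half_div_le (hS : SobolevOnBalls μ p σ C) (hp : 0 < p)
    (hσ : 0 < σ) (hC : 0 ≤ C) {x y : E} {r R : ℝ} (hr : 0 < r) (hrR : r ≤ R)
    (hxy : closedBall x r ⊆ ball y R) :
    μ.real (ball x (r / 2)) / μ.real (ball y R) ≤
      (5 * C * R / r) ^ (p * σ) * (μ.real (ball x r) / μ.real (ball y R)) ^ σ := by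
  set m := μ.real (ball y R)
  set F := (m⁻¹ * μ.real (ball x r)) ^ (1 / p)
  have hR : 0 < R := hr.trans_le hrR
  have hm : 0 ≤ m⁻¹ := by positivity
  have hsob := hS y R hR _ ⟨_, lipschitzWith_ballCutoff hr x⟩ (hasCompactSupport_ballCutoff hr x)
    ((tsupport_ballCutoff_subset_ball hr x).trans (ball_subset_closedBall.trans hxy))
  have hmono {I J : ℝ} (hI : 0 ≤ I) (hIJ : I ≤ J) : (m⁻¹ * I) ^ (1 / p) ≤ (m⁻¹ * J) ^ (1 / p) :=
    Real.rpow_le_rpow (by positivity) (mul_le_mul_of_nonneg_left hIJ hm) (by positivity)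
  have hgrad : (m⁻¹ * ∫ z in ball y R, ‖fderiv ℝ (ballCutoff x r) z‖ ^ p ∂μ) ^ (1 / p) ≤
      4 / r * F := by
    refine (hmono (integral_nonneg fun z => by positivity)
      (setIntegral_norm_fderiv_ballCutoff_le hr measure_ball_lt_top.ne _ hp)).trans_eq ?_
    rw [mul_left_comm, Real.mul_rpow (by positivity) (by positivity),
      ← Real.rpow_mul (by positivity), mul_one_div_cancel hp.ne', Real.rpow_one]
  have hvalue : (m⁻¹ * ∫ z in ball y R, |ballCutoff x r z| ^ p ∂μ) ^ (1 / p) ≤ F :=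
    hmono (integral_nonneg fun z => by positivity)
      (setIntegral_ballCutoff_le hr measure_ball_lt_top.ne _ hp)
  have hlow : m⁻¹ * μ.real (ball x (r / 2)) ≤
      m⁻¹ * ∫ z in ball y R, |ballCutoff x r z| ^ (p * σ) ∂μ :=
    mul_le_mul_of_nonneg_left (measureReal_ball_le_setIntegral_ballCutoff hr
      measure_ball_lt_top.ne ((ball_subset_ball (by linarith)).trans
        (ball_subset_closedBall.trans hxy)) (by positivity)) hm
  rw [div_eq_inv_mul (μ.real (ball x (r / 2))), div_eq_inv_mul (μ.real (ball x r))]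
  refine le_rpow_mul_rpow_of_rpow_one_div_le (by positivity) (by positivity) (by positivity) hp
    hσ ?_
  calc (m⁻¹ * μ.real (ball x (r / 2))) ^ (1 / (p * σ))
      ≤ (m⁻¹ * ∫ z in ball y R, |ballCutoff x r z| ^ (p * σ) ∂μ) ^ (1 / (p * σ)) := by gcongr
    _ ≤ C * R * (4 / r * F) + C * F :=
        hsob.trans (add_le_add (mul_le_mul_of_nonneg_left hgrad (by positivity))
          (mul_le_mul_of_nonneg_left hvalue hC))
    _ = C * F * (4 * (R / r) + 1) := by ring
    _ ≤ C * F * (5 * (R / r)) := by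
        gcongr
        linarith [(one_le_div hr).2 hrR]
    _ = 5 * C * R / r * F := by ring

-- `20 * C * 2 ^ k = 5 * C * (2 * R) / (R / 2 ^ (k + 1))` is the constant of the one-step estimate
-- in `ball y (2 * R)` at radius `R / 2 ^ (k + 1)`.
noncomputable def doublingThreshold (p σ C : ℝ) : ℝ := (2 * iterationScale (20 * C) (p * σ) σ)⁻¹

theorem doublingThreshold_pos (p σ : ℝ) {C : ℝ} (hC : 0 < C) : 0 < doublingThreshold p σ C :=
  inv_pos.2 (mul_pos two_pos (iterationScale_pos (by positivity) _ _))

theorem SobolevOnBalls.measureReal_ball_le_of_lt_doublingThreshold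
    (hS : SobolevOnBalls μ p σ C) (hp : 0 < p) (hσ : 1 < σ) (hC : 0 < C) {y : E} {R : ℝ}
    (hR : 0 < R) (hsmall : μ.real (ball y R) < doublingThreshold p σ C * μ.real (ball y (2 * R)))
    {x : E} (hx : x ∈ ball y (R / 2)) (k : ℕ) :
    μ.real (ball x (R / 2 ^ (k + 1))) ≤
      μ.real (ball y (2 * R)) * (iterationScale (20 * C) (p * σ) σ)⁻¹ * 2⁻¹ ^ σ ^ k := by
  set m := μ.real (ball y (2 * R))
  set c := iterationScale (20 * C) (p * σ) σ
  set a : ℕ → ℝ := fun k => μ.real (ball x (R / 2 ^ (k + 1))) / m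
  have hc : 0 < c := iterationScale_pos (by positivity) _ _
  have hm : 0 < m :=
    pos_of_mul_pos_right (measureReal_nonneg.trans_lt hsmall) (doublingThreshold_pos p σ hC).le
  have hrec (k : ℕ) : a (k + 1) ≤ (20 * C * 2 ^ k) ^ (p * σ) * a k ^ σ := by
    have hrad : R / 2 ^ (k + 1) ≤ R / 2 :=
      div_le_div_of_nonneg_left hR.le two_pos (le_self_pow₀ one_le_two k.succ_ne_zero)
    have hsub : closedBall x (R / 2 ^ (k + 1)) ⊆ ball y (2 * R) := fun z hz => by
      rw [mem_ball] at hx ⊢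
      linarith [dist_triangle z x y, mem_closedBall.1 hz]
    have h := hS.measureReal_ball_half_div_le hp (by linarith) hC.le (by positivity)
      (by linarith) hsub
    rwa [div_div, ← pow_succ,
      show 5 * C * (2 * R) / (R / 2 ^ (k + 1)) = 20 * C * 2 ^ k by field_simp; ring] at h
  have ha0 : c * a 0 ≤ 2⁻¹ := by
    have hsub : ball x (R / 2 ^ (0 + 1)) ⊆ ball y R := fun z hz => by
      rw [zero_add, pow_one] at hz
      rw [mem_ball] at hx hz ⊢
      linarith [dist_triangle z x y]
    calc c * a 0 ≤ c * (μ.real (ball y R) / m) := by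
          gcongr
          exact div_le_div_of_nonneg_right (measureReal_mono hsub measure_ball_lt_top.ne) hm.le
      _ ≤ c * doublingThreshold p σ C := by
          gcongr
          exact (div_le_iff₀ hm).2 hsmall.le
      _ = 2⁻¹ := by
          show c * (2 * c)⁻¹ = 2⁻¹
          field_simp
  have hak := le_iterationScale_inv_mul_rpow_pow (fun k => by positivity) (by positivity)
    (by positivity) hσ hrec k
  rw [div_le_iff₀ hm] at hak
  calc μ.real (ball x (R / 2 ^ (k + 1))) ≤ c⁻¹ * (c * a 0) ^ σ ^ k * m := hak
    _ ≤ c⁻¹ * 2⁻¹ ^ σ ^ k * m := by gcongr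
    _ = m * c⁻¹ * 2⁻¹ ^ σ ^ k := by ring

end Sobolev

theorem measureReal_ball_pos {X : Type*} [PseudoMetricSpace X] [ProperSpace X] [MeasurableSpace X]
    (μ : Measure X) [IsFiniteMeasureOnCompacts μ] [μ.IsOpenPosMeasure] (x : X) {r : ℝ}
    (hr : 0 < r) : 0 < μ.real (ball x r) :=
  ENNReal.toReal_pos (measure_ball_pos μ x hr).ne' measure_ball_lt_top.ne

theorem isFiniteMeasureOnCompacts_of_measure_ball_lt_top {X : Type*} [PseudoMetricSpace X]
    [MeasurableSpace X] {μ : Measure X} (h : ∀ (y : X) (R : ℝ), 0 < R → μ (ball y R) < ∞) :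
    IsFiniteMeasureOnCompacts μ where
  lt_top_of_isCompact K hK := by
    rcases K.eq_empty_or_nonempty with rfl | ⟨y, -⟩
    · simp
    obtain ⟨R, hR, hKR⟩ := hK.isBounded.subset_ball_lt 0 y
    exact (measure_mono hKR).trans_lt (h y R hR)

theorem isOpenPosMeasure_of_measure_ball_pos {X : Type*} [PseudoMetricSpace X]
    [MeasurableSpace X] {μ : Measure X} (h : ∀ (y : X) (R : ℝ), 0 < R → 0 < μ (ball y R)) :
    μ.IsOpenPosMeasure where
  open_pos U hU := fun ⟨x, hx⟩ => by
    obtain ⟨ε, hε, hεU⟩ := Metric.isOpen_iff.1 hU x hx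
    exact ((h x ε hε).trans_le (measure_mono hεU)).ne'

section Covering

variable {E : Type*} [NormedAddCommGroup E] [NormedSpace ℝ E] [FiniteDimensional ℝ E]
  [MeasurableSpace E] [BorelSpace E]

theorem card_le_of_isSeparated_of_subset_ball {s : Finset E} {y : E} {ρ ε : ℝ} (hρ : 0 ≤ ρ)
    (hε : 0 < ε) (hs : (s : Set E) ⊆ ball y ρ) (hsep : IsSeparated (ENNReal.ofReal ε) (s : Set E)) :
    (s.card : ℝ) ≤ ((2 * ρ + ε) / ε) ^ finrank ℝ E := by
  set μ : Measure E := Measure.addHaar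
  have hdisj : (s : Set E).PairwiseDisjoint fun c => ball c (ε / 2) := fun a ha b hb hab => by
    have h : ENNReal.ofReal ε < edist a b := hsep ha hb hab
    rw [edist_dist, ENNReal.ofReal_lt_ofReal_iff_of_nonneg hε.le] at h
    exact ball_disjoint_ball (by linarith)
  have hsub : ⋃ c ∈ s, ball c (ε / 2) ⊆ ball y (ρ + ε / 2) :=
    Set.iUnion₂_subset fun c hc => ball_subset_ball' (by linarith [mem_ball.1 (hs hc)])
  have hvol : (s.card : ℝ≥0∞) * ENNReal.ofReal ((ε / 2) ^ finrank ℝ E) * μ (ball 0 1) ≤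
      ENNReal.ofReal ((ρ + ε / 2) ^ finrank ℝ E) * μ (ball 0 1) := by
    calc (s.card : ℝ≥0∞) * ENNReal.ofReal ((ε / 2) ^ finrank ℝ E) * μ (ball 0 1)
        = ∑ c ∈ s, μ (ball c (ε / 2)) := by
          simp [Measure.addHaar_ball_of_pos μ _ (half_pos hε), mul_assoc]
      _ = μ (⋃ c ∈ s, ball c (ε / 2)) :=
          (measure_biUnion_finset hdisj fun _ _ => measurableSet_ball).symm
      _ ≤ μ (ball y (ρ + ε / 2)) := measure_mono hsub
      _ = ENNReal.ofReal ((ρ + ε / 2) ^ finrank ℝ E) * μ (ball 0 1) :=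
          Measure.addHaar_ball_of_pos μ y (by positivity)
  rw [ENNReal.mul_le_mul_iff_left (measure_ball_pos μ 0 one_pos).ne' measure_ball_lt_top.ne,
    ← ENNReal.ofReal_natCast, ← ENNReal.ofReal_mul (by positivity),
    ENNReal.ofReal_le_ofReal_iff (by positivity)] at hvol
  rw [show (2 * ρ + ε) / ε = (ρ + ε / 2) / (ε / 2) by field_simp, div_pow,
    le_div_iff₀ (by positivity)]
  exact hvol

theorem exists_finset_subset_ball_cover (y : E) {ρ r : ℝ} (hρ : 0 ≤ ρ) (hr : 0 < r) :
    ∃ s : Finset E, (s.card : ℝ) ≤ ((2 * ρ + r) / r) ^ finrank ℝ E ∧ (s : Set E) ⊆ ball y ρ ∧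
      ball y ρ ⊆ ⋃ c ∈ s, closedBall c r := by
  set N := ⌊((2 * ρ + r) / r) ^ finrank ℝ E⌋₊
  have hcard (t : Finset E) (ht : (t : Set E) ⊆ ball y ρ)
      (hsep : IsSeparated (r.toNNReal : ℝ≥0∞) (t : Set E)) : t.card ≤ N :=
    Nat.le_floor (card_le_of_isSeparated_of_subset_ball hρ hr ht hsep)
  have hencard (C : Set E) (hC : C ⊆ ball y ρ) (hsep : IsSeparated (r.toNNReal : ℝ≥0∞) C) :
      C.encard ≤ N := by
    rcases C.finite_or_infinite with hfin | hinf
    · obtain ⟨t, rfl⟩ := hfin.exists_finset_coe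
      rw [Set.encard_coe_eq_coe_finsetCard]
      exact_mod_cast hcard t hC hsep
    · obtain ⟨t, htC, htcard⟩ := hinf.exists_subset_card_eq (N + 1)
      have := hcard t (htC.trans hC) (hsep.subset htC)
      omega
  have hpack : packingNumber r.toNNReal (ball y ρ) ≠ ⊤ :=
    ne_top_of_le_ne_top (ENat.natCast_ne_top N)
      (iSup_le fun C => iSup_le fun hC => iSup_le fun hsep => hencard C hC hsep)
  set S := maximalSeparatedSet r.toNNReal (ball y ρ)
  have hS : S.Finite :=
    Set.finite_of_encard_le_coe
      (hencard S maximalSeparatedSet_subset isSeparated_maximalSeparatedSet)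
  refine ⟨hS.toFinset, ?_, by simpa using maximalSeparatedSet_subset, ?_⟩
  · refine card_le_of_isSeparated_of_subset_ball (y := y) hρ hr ?_ ?_ <;> rw [hS.coe_toFinset]
    exacts [maximalSeparatedSet_subset, isSeparated_maximalSeparatedSet]
  · simpa [Real.coe_toNNReal _ hr.le] using
      isCover_iff_subset_iUnion_closedBall.1 (isCover_maximalSeparatedSet hpack)

theorem measure_ball_le_of_forall_measure_ball_le (μ : Measure E) (y : E) {ρ r : ℝ} {M : ℝ≥0∞}
    (hρ : 0 ≤ ρ) (hr : 0 < r) (hM : ∀ x ∈ ball y ρ, μ (ball x r) ≤ M) :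
    μ (ball y ρ) ≤ ENNReal.ofReal (((4 * ρ + r) / r) ^ finrank ℝ E) * M := by
  obtain ⟨s, hcard, hsub, hcover⟩ := exists_finset_subset_ball_cover y hρ (half_pos hr)
  calc μ (ball y ρ) ≤ μ (⋃ c ∈ s, ball c r) :=
        measure_mono (hcover.trans (Set.iUnion₂_mono fun c _ =>
          closedBall_subset_ball (half_lt_self hr)))
    _ ≤ ∑ c ∈ s, μ (ball c r) := measure_biUnion_finset_le _ _
    _ ≤ ∑ c ∈ s, M := Finset.sum_le_sum fun c hc => hM c (hsub hc)
    _ = ENNReal.ofReal s.card * M := by simp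
    _ ≤ ENNReal.ofReal (((4 * ρ + r) / r) ^ finrank ℝ E) * M := by
        gcongr
        convert hcard using 2
        field_simp
        ring

end Covering

section Doubling

variable {E : Type*} [NormedAddCommGroup E] [NormedSpace ℝ E] [FiniteDimensional ℝ E]
  [MeasurableSpace E] [BorelSpace E] {μ : Measure E} [IsFiniteMeasureOnCompacts μ]
  [μ.IsOpenPosMeasure] {p σ C : ℝ}

theorem SobolevOnBalls.doublingThreshold_mul_le (hS : SobolevOnBalls μ p σ C) (hp : 0 < p)
    (hσ : 1 < σ) (hC : 0 < C) (y : E) {R : ℝ} (hR : 0 < R) :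
    doublingThreshold p σ C * μ.real (ball y (2 * R)) ≤ μ.real (ball y R) := by
  by_contra! hsmall
  set m := μ.real (ball y (2 * R))
  set c := iterationScale (20 * C) (p * σ) σ
  set d := finrank ℝ E
  have hc : 0 < c := iterationScale_pos (by positivity) _ _
  have hcover (k : ℕ) :
      μ.real (ball y (R / 2)) ≤ 5 ^ d * m * c⁻¹ * ((2 ^ d) ^ k * 2⁻¹ ^ σ ^ k) := by
    have hrad : 0 < R / 2 ^ (k + 1) := by positivity
    have h := measure_ball_le_of_forall_measure_ball_le μ y (by positivity) hrad
      (M := ENNReal.ofReal (m * c⁻¹ * 2⁻¹ ^ σ ^ k)) fun x hx =>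
        (ENNReal.le_ofReal_iff_toReal_le measure_ball_lt_top.ne (by positivity)).2
          (hS.measureReal_ball_le_of_lt_doublingThreshold hp hσ hC hR hsmall hx k)
    rw [← ENNReal.ofReal_mul (by positivity), ← ENNReal.ofReal_toReal measure_ball_lt_top.ne,
      ENNReal.ofReal_le_ofReal_iff (by positivity)] at h
    have hcount : (4 * (R / 2) + R / 2 ^ (k + 1)) / (R / 2 ^ (k + 1)) ≤ 5 * 2 ^ k := by
      rw [div_le_iff₀ hrad]
      field_simp
      rw [pow_succ]
      linarith [one_le_pow₀ (M₀ := ℝ) one_le_two (n := k)]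
    calc μ.real (ball y (R / 2))
        ≤ ((4 * (R / 2) + R / 2 ^ (k + 1)) / (R / 2 ^ (k + 1))) ^ d * (m * c⁻¹ * 2⁻¹ ^ σ ^ k) := h
      _ ≤ (5 * 2 ^ k) ^ d * (m * c⁻¹ * 2⁻¹ ^ σ ^ k) := by gcongr
      _ = _ := by rw [mul_pow, ← pow_mul, pow_mul']; ring
  have hlim : Tendsto (fun k : ℕ => 5 ^ d * m * c⁻¹ * ((2 ^ d) ^ k * 2⁻¹ ^ σ ^ k)) atTop (𝓝 0) := by
    simpa using (tendsto_pow_mul_rpow_pow_atTop_nhds_zero (2 ^ d) (by norm_num) (by norm_num)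
      hσ).const_mul (5 ^ d * m * c⁻¹)
  exact (measureReal_ball_pos μ y (half_pos hR)).not_ge (ge_of_tendsto' hlim hcover)

end Doubling

theorem stmt12 (n : ℕ) (μ : Measure (EuclideanSpace ℝ (Fin n)))
    (hμ : ∀ (y : EuclideanSpace ℝ (Fin n)) (R : ℝ), 0 < R →
      0 < μ (ball y R) ∧ μ (ball y R) < ⊤)
    (p σ C_S : ℝ) (hp : 1 ≤ p) (hσ : 1 < σ) (hC : 0 < C_S)
    (hSob : ∀ (y : EuclideanSpace ℝ (Fin n)) (R : ℝ), 0 < R →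
      ∀ φ : EuclideanSpace ℝ (Fin n) → ℝ,
        (∃ L : ℝ≥0, LipschitzWith L φ) → HasCompactSupport φ → tsupport φ ⊆ ball y R →
        ((μ (ball y R)).toReal⁻¹ * ∫ x in ball y R, |φ x| ^ (p * σ) ∂μ) ^ (1 / (p * σ)) ≤
          C_S * R * ((μ (ball y R)).toReal⁻¹ *
              ∫ x in ball y R, ‖fderiv ℝ φ x‖ ^ p ∂μ) ^ (1 / p) +
          C_S * ((μ (ball y R)).toReal⁻¹ * ∫ x in ball y R, |φ x| ^ p ∂μ) ^ (1 / p)) :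
    ∃ C_D : ℝ≥0, 1 ≤ C_D ∧
      ∀ (y : EuclideanSpace ℝ (Fin n)) (R : ℝ), 0 < R →
        μ (ball y (2 * R)) ≤ C_D * μ (ball y R) := by
  have := isFiniteMeasureOnCompacts_of_measure_ball_lt_top fun y R hR => (hμ y R hR).2
  have := isOpenPosMeasure_of_measure_ball_pos fun y R hR => (hμ y R hR).1
  set δ := doublingThreshold p σ C_S
  have hδ : 0 < δ := doublingThreshold_pos p σ hC
  refine ⟨max 1 δ⁻¹.toNNReal, le_max_left _ _, fun y R hR => ?_⟩
  have hkey : δ * μ.real (ball y (2 * R)) ≤ μ.real (ball y R) :=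
    SobolevOnBalls.doublingThreshold_mul_le hSob (by linarith) hσ hC y hR
  calc μ (ball y (2 * R)) = ENNReal.ofReal (μ.real (ball y (2 * R))) :=
        (ofReal_measureReal measure_ball_lt_top.ne).symm
    _ ≤ ENNReal.ofReal (δ⁻¹ * μ.real (ball y R)) :=
        ENNReal.ofReal_le_ofReal ((le_inv_mul_iff₀ hδ).2 hkey)
    _ = ENNReal.ofReal δ⁻¹ * μ (ball y R) := by
        rw [ENNReal.ofReal_mul (by positivity), ofReal_measureReal measure_ball_lt_top.ne]
    _ ≤ (max 1 δ⁻¹.toNNReal : ℝ≥0) * μ (ball y R) := by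
        gcongr
        exact ENNReal.coe_le_coe.2 (le_max_right _ _)
end
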